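/- arXiv:1612.00854 — 13 statements merged into one kernel-verified Lean document; each statement's English description precedes it below -/
import Mathlib

section
/- Define sequences a, b, φ : ℤ → ℝ by a_n = 1/2, b_n = (2 − 3n²)/(4 + n⁴), and φ_n = 1/(1 + n²). Then φ is a square-summable eigenfunction at eigenvalue 1 of the associated Jacobi operator: for every n ∈ ℤ, (1/2) φ_{n−1} + b_n φ_n + (1/2) φ_{n+1} = φ_n, and ∑_{n∈ℤ} φ_n² < ∞. -/
/-- Teschl's example of an eigenvalue at the edge of the essential spectrum:
for `aₙ = 1/2`, `bₙ = (2 − 3n²)/(4 + n⁴)`, the sequence `φₙ = 1/(1 + n²)` is a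
square-summable eigenfunction of the Jacobi operator at eigenvalue `1`. -/
theorem stmt_5 :
    (∀ n : ℤ,
      (1 / 2 : ℝ) * (1 / (1 + ((n : ℝ) - 1) ^ 2))
        + ((2 - 3 * (n : ℝ) ^ 2) / (4 + (n : ℝ) ^ 4)) * (1 / (1 + (n : ℝ) ^ 2))
        + (1 / 2) * (1 / (1 + ((n : ℝ) + 1) ^ 2))
      = 1 / (1 + (n : ℝ) ^ 2)) ∧
    Summable (fun n : ℤ => (1 / (1 + (n : ℝ) ^ 2)) ^ 2) := by
  constructor
  · intro n
    set x : ℝ := (n : ℝ)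
    have h1 : (1 + (x - 1) ^ 2) ≠ 0 := by positivity
    have h2 : (1 + x ^ 2) ≠ 0 := by positivity
    have h3 : (1 + (x + 1) ^ 2) ≠ 0 := by positivity
    have h4 : (4 + x ^ 4) ≠ 0 := by positivity
    field_simp
    ring
  · have h : Summable (fun n : ℤ => 1 / (1 + (n : ℝ) ^ 2)) := by
      have := Real.summable_one_div_int_pow.mpr (by norm_num : 1 < 2)
      apply Summable.of_norm_bounded_eventually (g := fun n : ℤ => 1 / (n : ℝ) ^ 2) this
      have hmem : {(0 : ℤ)}ᶜ ∈ Filter.cofinite :=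
        (Set.finite_singleton (0 : ℤ)).compl_mem_cofinite
      filter_upwards [hmem] with n hn
      have hn : n ≠ 0 := hn
      have hn2 : (1 : ℝ) ≤ (n : ℝ) ^ 2 := by
        have : (1 : ℤ) ≤ n ^ 2 := by
          rcases lt_or_gt_of_ne hn with h | h <;> nlinarith
        exact_mod_cast this
      rw [Real.norm_eq_abs, abs_of_nonneg (by positivity)]
      apply one_div_le_one_div_of_le (by linarith)
      linarith
    apply Summable.of_nonneg_of_le (fun n => by positivity) _ h
    intro n
    have h2 : (0:ℝ) < 1 + (n : ℝ) ^ 2 := by positivity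
    have : (1:ℝ) ≤ 1 + (n:ℝ)^2 := by nlinarith [sq_nonneg ((n:ℝ))]
    calc (1 / (1 + (n : ℝ) ^ 2)) ^ 2 = 1 / (1 + (n:ℝ)^2) * (1 / (1 + (n:ℝ)^2)) := sq _
      _ ≤ 1 * (1 / (1 + (n:ℝ)^2)) := by
          apply mul_le_mul_of_nonneg_right _ (by positivity)
          rw [div_le_one h2]; exact this
      _ = 1 / (1 + (n:ℝ)^2) := one_mul _
end

section
/- Let H be a complex Hilbert space and let P, L, Q : ℝ → B(H) be families of bounded linear operators on H such that: P(t)* = −P(t) for every t; L is differentiable with L′(t) = P(t) L(t) − L(t) P(t) for every t; Q is differentiable with Q′(t) = P(t) Q(t) for every t; and Q(0) = I. Then for every t ∈ ℝ, Q(t)* Q(t) = I and Q(t)* L(t) Q(t) = L(0). In particular ‖L(t)‖ = ‖L(0)‖ whenever Q(t) is unitary, and the Lax flow is isospectral. -/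
open ContinuousLinearMap in
lemma aux_isometry_norm_le {H : Type*} [NormedAddCommGroup H] [InnerProductSpace ℂ H]
    [CompleteSpace H] (A : H →L[ℂ] H) (h : star A * A = 1) : ‖A‖ ≤ 1 := by
  have h' : adjoint A * A = 1 := by rw [← ContinuousLinearMap.star_eq_adjoint]; exact h
  have hx : ∀ x : H, ‖A x‖ = ‖x‖ := by
    intro x
    have key : (inner ℂ (A x) (A x) : ℂ) = inner ℂ x x := by
      have hAA : adjoint A (A x) = x := by
        have := congrArg (fun T : H →L[ℂ] H => T x) h'
        simpa [ContinuousLinearMap.mul_apply] using this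
      have e := ContinuousLinearMap.adjoint_inner_left A x (A x)
      rw [hAA] at e
      exact e.symm
    rw [norm_eq_sqrt_re_inner (𝕜 := ℂ) (A x), norm_eq_sqrt_re_inner (𝕜 := ℂ) x, key]
  refine A.opNorm_le_bound zero_le_one fun x => ?_
  rw [hx x, one_mul]

open ContinuousLinearMap in
/-- Isospectrality of the Lax flow: if `P(t)` is skew-adjoint, `L` satisfies the
Lax equation `L' = [P, L]`, and `Q' = PQ` with `Q(0) = I`, then `Q(t)*Q(t) = I`
and `Q(t)* L(t) Q(t) = L(0)`; in particular `‖L(t)‖ = ‖L(0)‖` whenever `Q(t)` is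
unitary. -/
theorem stmt_6 {H : Type*} [NormedAddCommGroup H] [InnerProductSpace ℂ H] [CompleteSpace H]
    (P L Q : ℝ → H →L[ℂ] H)
    (hP : ∀ t : ℝ, adjoint (P t) = -(P t))
    (hL : ∀ t : ℝ, HasDerivAt L (P t * L t - L t * P t) t)
    (hQ : ∀ t : ℝ, HasDerivAt Q (P t * Q t) t)
    (hQ0 : Q 0 = 1) :
    ∀ t : ℝ,
      adjoint (Q t) * Q t = 1 ∧
      adjoint (Q t) * L t * Q t = L 0 ∧
      (Q t * adjoint (Q t) = 1 → ‖L t‖ = ‖L 0‖) := by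
  have hP' : ∀ t : ℝ, star (P t) = -(P t) := by
    intro t; rw [ContinuousLinearMap.star_eq_adjoint]; exact hP t
  have hQs : ∀ t : ℝ, HasDerivAt (fun s => star (Q s)) (star (P t * Q t)) t :=
    fun t => (hQ t).star
  -- F(t) = star (Q t) * Q t is constant
  have hF : ∀ t : ℝ, HasDerivAt (fun s => star (Q s) * Q s) 0 t := by
    intro t
    have h0 : star (P t * Q t) * Q t + star (Q t) * (P t * Q t) = 0 := by
      rw [star_mul, hP' t]; noncomm_ring
    have hd := (hQs t).mul (hQ t)
    rw [h0] at hd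
    exact hd
  have hFconst : ∀ t : ℝ, star (Q t) * Q t = 1 := by
    intro t
    have := is_const_of_deriv_eq_zero (f := fun s => star (Q s) * Q s)
      (fun s => (hF s).differentiableAt) (fun s => (hF s).deriv) t 0
    simpa [hQ0] using this
  -- G(t) = star (Q t) * L t * Q t is constant
  have hG : ∀ t : ℝ, HasDerivAt (fun s => star (Q s) * L s * Q s) 0 t := by
    intro t
    have h0 : (star (P t * Q t) * L t + star (Q t) * (P t * L t - L t * P t)) * Q t
        + star (Q t) * L t * (P t * Q t) = 0 := by
      rw [star_mul, hP' t]; noncomm_ring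
    have hd := ((hQs t).mul (hL t)).mul (hQ t)
    simp only [Pi.mul_apply] at hd
    rw [h0] at hd
    exact hd
  have hGconst : ∀ t : ℝ, star (Q t) * L t * Q t = L 0 := by
    intro t
    have := is_const_of_deriv_eq_zero (f := fun s => star (Q s) * L s * Q s)
      (fun s => (hG s).differentiableAt) (fun s => (hG s).deriv) t 0
    simpa [hQ0] using this
  intro t
  have h1 : star (Q t) * Q t = 1 := hFconst t
  have h2 : star (Q t) * L t * Q t = L 0 := hGconst t
  refine ⟨by rw [← ContinuousLinearMap.star_eq_adjoint]; exact h1,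
    by rw [← ContinuousLinearMap.star_eq_adjoint]; exact h2, ?_⟩
  intro hU
  rw [← ContinuousLinearMap.star_eq_adjoint] at hU
  have hQn : ‖Q t‖ ≤ 1 := aux_isometry_norm_le (Q t) h1
  have hQsn : ‖star (Q t)‖ ≤ 1 := by
    refine aux_isometry_norm_le (star (Q t)) ?_
    rw [star_star]; exact hU
  have hLrec : L t = Q t * L 0 * star (Q t) := by
    calc L t = (Q t * star (Q t)) * L t * (Q t * star (Q t)) := by rw [hU]; simp
      _ = Q t * (star (Q t) * L t * Q t) * star (Q t) := by noncomm_ring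
      _ = Q t * L 0 * star (Q t) := by rw [h2]
  have key : ∀ (a c b : H →L[ℂ] H), ‖a‖ ≤ 1 → ‖b‖ ≤ 1 → ‖a * c * b‖ ≤ ‖c‖ := by
    intro a c b ha hb
    calc ‖a * c * b‖ ≤ ‖a * c‖ * ‖b‖ := norm_mul_le _ _
      _ ≤ (‖a‖ * ‖c‖) * ‖b‖ := by
          exact mul_le_mul_of_nonneg_right (norm_mul_le _ _) (norm_nonneg _)
      _ ≤ ‖c‖ * 1 := by
          have h3 : ‖a‖ * ‖c‖ ≤ ‖c‖ := by nlinarith [norm_nonneg c]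
          exact mul_le_mul h3 hb (norm_nonneg b) (norm_nonneg c)
      _ = ‖c‖ := mul_one _
  have le1 : ‖L 0‖ ≤ ‖L t‖ := by
    rw [← h2]
    have := key (star (Q t)) (L t) (Q t) hQsn hQn
    simpa [mul_assoc] using this
  have le2 : ‖L t‖ ≤ ‖L 0‖ := by
    rw [hLrec]
    exact key (Q t) (L 0) (star (Q t)) hQn hQsn
  exact le_antisymm le2 le1
end

section
/- (Darboux's theorem.) Let λ, λ₁ ∈ ℂ, let u : ℝ → ℂ be differentiable, let y₁ : ℝ → ℂ be twice differentiable with y₁(x) ≠ 0 for all x and y₁″ + (λ₁ − u) y₁ = 0, and let y : ℝ → ℂ be twice differentiable with y″ + (λ − u) y = 0. Set l₁ = y₁′/y₁, y[1] = y′ − l₁ y, and u[1] = u − 2 l₁′. Then y[1] is twice differentiable and satisfies y[1]″ + (λ − u[1]) y[1] = 0. -/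
/-- Darboux's theorem: if `y₁` is a nonvanishing solution of
`y₁'' + (λ₁ − u) y₁ = 0` and `y` solves `y'' + (λ − u) y = 0`, then
`y[1] = y' − (y₁'/y₁) y` solves `y[1]'' + (λ − u[1]) y[1] = 0` where
`u[1] = u − 2 (y₁'/y₁)'`. -/
theorem stmt_7 (lam lam1 : ℂ) (u y y1 : ℝ → ℂ)
    (hu : Differentiable ℝ u)
    (hy1 : Differentiable ℝ y1) (hy1' : Differentiable ℝ (deriv y1))
    (hy1ne : ∀ x : ℝ, y1 x ≠ 0)
    (heq1 : ∀ x : ℝ, deriv (deriv y1) x + (lam1 - u x) * y1 x = 0)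
    (hy : Differentiable ℝ y) (hy' : Differentiable ℝ (deriv y))
    (heq : ∀ x : ℝ, deriv (deriv y) x + (lam - u x) * y x = 0) :
    Differentiable ℝ (fun x => deriv y x - (deriv y1 x / y1 x) * y x) ∧
    Differentiable ℝ (deriv (fun x => deriv y x - (deriv y1 x / y1 x) * y x)) ∧
    ∀ x : ℝ,
      deriv (deriv (fun x => deriv y x - (deriv y1 x / y1 x) * y x)) x
        + (lam - (u x - 2 * deriv (fun x => deriv y1 x / y1 x) x))
          * (deriv y x - (deriv y1 x / y1 x) * y x) = 0 := by
  have key1 : ∀ x, deriv (deriv y1) x = (u x - lam1) * y1 x := fun x => by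
    linear_combination heq1 x
  have key : ∀ x, deriv (deriv y) x = (u x - lam) * y x := fun x => by
    linear_combination heq x
  have hld : Differentiable ℝ (fun x => deriv y1 x / y1 x) :=
    hy1'.div hy1 hy1ne
  have hderiv_l : ∀ x, deriv (fun x => deriv y1 x / y1 x) x
      = (u x - lam1) - (deriv y1 x / y1 x) ^ 2 := by
    intro x
    rw [deriv_fun_div (hy1' x) (hy1 x) (hy1ne x), key1 x]
    field_simp [hy1ne x]
  have hf : Differentiable ℝ (fun x => deriv y x - (deriv y1 x / y1 x) * y x) :=
    hy'.sub (hld.mul hy)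
  have hdf : deriv (fun x => deriv y x - (deriv y1 x / y1 x) * y x)
      = fun x => (u x - lam) * y x
          - ((u x - lam1) - (deriv y1 x / y1 x) ^ 2) * y x
          - (deriv y1 x / y1 x) * deriv y x := by
    funext x
    rw [deriv_fun_sub (hy' x) ((hld x).fun_mul (hy x)),
        deriv_fun_mul (hld x) (hy x), key x, hderiv_l x]
    ring
  have hg : Differentiable ℝ (fun x => (u x - lam) * y x
      - ((u x - lam1) - (deriv y1 x / y1 x) ^ 2) * y x
      - (deriv y1 x / y1 x) * deriv y x) :=
    (((hu.sub_const lam).mul hy).sub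
      (((hu.sub_const lam1).sub (hld.pow 2)).mul hy)).sub
      (hld.mul hy')
  refine ⟨hf, ?_, ?_⟩
  · rw [hdf]; exact hg
  · intro x
    have Hu : HasDerivAt u (deriv u x) x := (hu x).hasDerivAt
    have Hy : HasDerivAt y (deriv y x) x := (hy x).hasDerivAt
    have Hy' : HasDerivAt (deriv y) ((u x - lam) * y x) x := by
      have h := (hy' x).hasDerivAt; rwa [key x] at h
    have Hl : HasDerivAt (fun x => deriv y1 x / y1 x)
        ((u x - lam1) - (deriv y1 x / y1 x) ^ 2) x := by
      have h := (hld x).hasDerivAt; rwa [hderiv_l x] at h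
    have Hl2 : HasDerivAt (fun x => (deriv y1 x / y1 x) ^ 2)
        (((u x - lam1) - (deriv y1 x / y1 x) ^ 2) * (deriv y1 x / y1 x)
          + (deriv y1 x / y1 x) * ((u x - lam1) - (deriv y1 x / y1 x) ^ 2)) x := by
      simpa [pow_two] using Hl.fun_mul Hl
    have Hbig := (((Hu.sub_const lam).mul Hy).sub
        ((((Hu.sub_const lam1).sub Hl2).mul Hy))).sub (Hl.mul Hy')
    have hder : deriv (fun x => (u x - lam) * y x
        - ((u x - lam1) - (deriv y1 x / y1 x) ^ 2) * y x
        - (deriv y1 x / y1 x) * deriv y x) x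
        = (deriv u x * y x + (u x - lam) * deriv y x
            - ((deriv u x - (((u x - lam1) - (deriv y1 x / y1 x) ^ 2) * (deriv y1 x / y1 x)
                + (deriv y1 x / y1 x) * ((u x - lam1) - (deriv y1 x / y1 x) ^ 2))) * y x
              + ((u x - lam1) - (deriv y1 x / y1 x) ^ 2) * deriv y x))
          - (((u x - lam1) - (deriv y1 x / y1 x) ^ 2) * deriv y x
            + (deriv y1 x / y1 x) * ((u x - lam) * y x)) := Hbig.deriv
    rw [hdf, hder, hderiv_l x]
    ring
end

section
/- (Nonlinear superposition for the potential KdV equation.) Let α₁, α₂ ∈ ℝ and let u, u₁, u₂, w : ℝ → ℝ be differentiable functions satisfying for all x: (u₁ + u)′ = 2α₁ + ½(u₁ − u)², (u₂ + u)′ = 2α₂ + ½(u₂ − u)², (w + u₁)′ = 2α₂ + ½(w − u₁)², and (w + u₂)′ = 2α₁ + ½(w − u₂)². Then at every point x with u₁(x) ≠ u₂(x) one has w = u − 4(α₁ − α₂)/(u₁ − u₂). -/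
/-!
The two orders of composing `B_{α₁}` and `B_{α₂}` express `(u + u₁ + u₂ + w)′` in two ways.
Equating them eliminates every derivative, and the difference of squares factors as
`(u₁ − u₂)(w − u)`, leaving the algebraic relation `4(α₁ − α₂) + (u₁ − u₂)(w − u) = 0`.
-/

section

variable {𝕜 : Type*} [NontriviallyNormedField 𝕜] {F : Type*} [NormedAddCommGroup F]
  [NormedSpace 𝕜 F] {a b c d : 𝕜 → F} {x : 𝕜}

theorem deriv_fun_add_add_deriv_fun_add_comm (ha : DifferentiableAt 𝕜 a x)
    (hb : DifferentiableAt 𝕜 b x) (hc : DifferentiableAt 𝕜 c x) (hd : DifferentiableAt 𝕜 d x) :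
    deriv (fun t => a t + b t) x + deriv (fun t => d t + c t) x =
      deriv (fun t => c t + b t) x + deriv (fun t => d t + a t) x := by
  rw [deriv_fun_add ha hb, deriv_fun_add hd hc, deriv_fun_add hc hb, deriv_fun_add hd ha]
  abel

end

theorem superposition_of_backlund_sum_eq {α₁ α₂ u u₁ u₂ w : ℝ}
    (hsum : 2 * α₁ + (1 / 2) * (u₁ - u) ^ 2 + (2 * α₁ + (1 / 2) * (w - u₂) ^ 2) =
      2 * α₂ + (1 / 2) * (u₂ - u) ^ 2 + (2 * α₂ + (1 / 2) * (w - u₁) ^ 2))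
    (hne : u₁ ≠ u₂) :
    w = u - 4 * (α₁ - α₂) / (u₁ - u₂) := by
  have relation : 4 * (α₁ - α₂) + (u₁ - u₂) * (w - u) = 0 := by linear_combination hsum
  have hne' : u₁ - u₂ ≠ 0 := sub_ne_zero.mpr hne
  field_simp
  linear_combination relation

/-- Nonlinear superposition (Bianchi permutability) for the potential KdV
equation: if `u₁ = B_{α₁}(u)`, `u₂ = B_{α₂}(u)`, `w = B_{α₂}(u₁) = B_{α₁}(u₂)`
via the spatial part of the Bäcklund transformation, then
`w = u − 4(α₁ − α₂)/(u₁ − u₂)` wherever `u₁ ≠ u₂`. -/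
theorem stmt_8 (α₁ α₂ : ℝ) (u u₁ u₂ w : ℝ → ℝ)
    (hu : Differentiable ℝ u) (hu₁ : Differentiable ℝ u₁)
    (hu₂ : Differentiable ℝ u₂) (hw : Differentiable ℝ w)
    (h1 : ∀ x : ℝ, deriv (fun t => u₁ t + u t) x = 2 * α₁ + (1 / 2) * (u₁ x - u x) ^ 2)
    (h2 : ∀ x : ℝ, deriv (fun t => u₂ t + u t) x = 2 * α₂ + (1 / 2) * (u₂ x - u x) ^ 2)
    (h3 : ∀ x : ℝ, deriv (fun t => w t + u₁ t) x = 2 * α₂ + (1 / 2) * (w x - u₁ x) ^ 2)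
    (h4 : ∀ x : ℝ, deriv (fun t => w t + u₂ t) x = 2 * α₁ + (1 / 2) * (w x - u₂ x) ^ 2) :
    ∀ x : ℝ, u₁ x ≠ u₂ x → w x = u x - 4 * (α₁ - α₂) / (u₁ x - u₂ x) := by
  intro x hx
  have hsum := deriv_fun_add_add_deriv_fun_add_comm (hu₁ x) (hu x) (hu₂ x) (hw x)
  rw [h1, h2, h3, h4] at hsum
  exact superposition_of_backlund_sum_eq hsum hx
end

section
/- Let f, p, q, p₁₀, q₁₀ : ℝ → ℂ be differentiable functions satisfying for all x: f′ = 2(p q − p₁₀ q₁₀), p′ = 2(p f − p₁₀), and q₁₀′ = 2(q − q₁₀ f). Then (f − p q₁₀)′ = 0, i.e. the quantity f − p q₁₀ is constant. -/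
/-! Differentiating `f - p q₁₀` and substituting the three equations, the terms `2 p q` and
`2 p₁₀ q₁₀` cancel in pairs and what remains is `2 p (q₁₀ f - f q₁₀) = 0`; a function with
vanishing derivative on `ℝ` is constant. -/

theorem deriv_sub_mul_eq_zero_of_backlund {𝕜 𝔸 : Type*} [NontriviallyNormedField 𝕜]
    [NormedCommRing 𝔸] [NormedAlgebra 𝕜 𝔸] {f p q p₁₀ q₁₀ : 𝕜 → 𝔸} {x : 𝕜}
    (hf : DifferentiableAt 𝕜 f x) (hp : DifferentiableAt 𝕜 p x)
    (hq₁₀ : DifferentiableAt 𝕜 q₁₀ x)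
    (h1 : deriv f x = 2 * (p x * q x - p₁₀ x * q₁₀ x))
    (h2 : deriv p x = 2 * (p x * f x - p₁₀ x))
    (h3 : deriv q₁₀ x = 2 * (q x - q₁₀ x * f x)) :
    deriv (fun t => f t - p t * q₁₀ t) x = 0 := by
  rw [deriv_fun_sub hf (hp.fun_mul hq₁₀), deriv_fun_mul hp hq₁₀, h1, h2, h3]
  ring

/-- The Bäcklund system satisfied by the entries of the elementary Darboux
matrix of NLS admits the first integral `f − p q₁₀`: its derivative vanishes,
so it is constant. -/
theorem stmt_9 (f p q p₁₀ q₁₀ : ℝ → ℂ)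
    (hf : Differentiable ℝ f) (hp : Differentiable ℝ p)
    (hq₁₀ : Differentiable ℝ q₁₀)
    (h1 : ∀ x : ℝ, deriv f x = 2 * (p x * q x - p₁₀ x * q₁₀ x))
    (h2 : ∀ x : ℝ, deriv p x = 2 * (p x * f x - p₁₀ x))
    (h3 : ∀ x : ℝ, deriv q₁₀ x = 2 * (q x - q₁₀ x * f x)) :
    (∀ x : ℝ, deriv (fun t => f t - p t * q₁₀ t) x = 0) ∧
    (∀ x x' : ℝ, f x - p x * q₁₀ x = f x' - p x' * q₁₀ x') := by
  have hderiv : ∀ x, deriv (fun t => f t - p t * q₁₀ t) x = 0 := fun x =>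
    deriv_sub_mul_eq_zero_of_backlund (hf x) (hp x) (hq₁₀ x) (h1 x) (h2 x) (h3 x)
  exact ⟨hderiv, is_const_of_deriv_eq_zero (hf.sub (hp.mul hq₁₀)) hderiv⟩
end

section
/- Let p, q, f, g : ℤ × ℤ → ℂ, and use the shift notation h_{ij}(n,m) = h(n+i, m+j). Suppose that for all (n,m) one has 1 + p q₁₁ ≠ 0 and the relations: p₀₁ = (q₁₀ p² + (g₁₀ − f) p + p₁₀)/(1 + p q₁₁), q₀₁ = (p₁₀ q₁₁² + (f − g₁₀) q₁₁ + q₁₀)/(1 + p q₁₁), f₀₁ = (q₁₁ (p₁₀ + p g₁₀) + f − p q₁₀)/(1 + p q₁₁), and g = (q₁₁ (p f − p₁₀) + g₁₀ + p q₁₀)/(1 + p q₁₁). Then for all (n,m): f₀₁ − p₀₁ q₁₁ = f − p q₁₀ and g₁₀ − p₁₀ q₁₁ = g − p q₀₁; consequently there exist functions α : ℤ → ℂ and β : ℤ → ℂ such that f(n,m) − p(n,m) q(n+1,m) = α(n) and g(n,m) − p(n,m) q(n,m+1) = β(m) for all (n,m). -/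
/-! The relations for `p₀₁` and `f₀₁` share the denominator `1 + p q₁₁`, and clearing it makes
`f₀₁ − p₀₁ q₁₁ = f − p q₁₀` a polynomial identity; likewise for `q₀₁`, `g` and the
`n`-direction. A function on `ℤ` invariant under the unit shift is constant, which produces
`α` and `β`. -/

section DarbouxFirstIntegrals

variable {K : Type*} [Field K]

theorem darboux_first_integral_f {p p₁₀ p₀₁ q₁₀ q₁₁ f f₀₁ g₁₀ : K} (hne : 1 + p * q₁₁ ≠ 0)
    (hp : p₀₁ = (q₁₀ * p ^ 2 + (g₁₀ - f) * p + p₁₀) / (1 + p * q₁₁))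
    (hf : f₀₁ = (q₁₁ * (p₁₀ + p * g₁₀) + f - p * q₁₀) / (1 + p * q₁₁)) :
    f₀₁ - p₀₁ * q₁₁ = f - p * q₁₀ := by
  rw [hf, hp, div_mul_eq_mul_div, div_sub_div_same, div_eq_iff hne]
  ring

theorem darboux_first_integral_g {p p₁₀ q₀₁ q₁₀ q₁₁ f g g₁₀ : K} (hne : 1 + p * q₁₁ ≠ 0)
    (hq : q₀₁ = (p₁₀ * q₁₁ ^ 2 + (f - g₁₀) * q₁₁ + q₁₀) / (1 + p * q₁₁))
    (hg : g = (q₁₁ * (p * f - p₁₀) + g₁₀ + p * q₁₀) / (1 + p * q₁₁)) :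
    g₁₀ - p₁₀ * q₁₁ = g - p * q₀₁ := by
  rw [hg, hq, mul_div_assoc', div_sub_div_same, eq_div_iff hne]
  ring

end DarbouxFirstIntegrals

theorem Function.Periodic.eq_apply_zero_of_int {α : Type*} {u : ℤ → α} (h : Function.Periodic u 1)
    (m : ℤ) : u m = u 0 := by
  simpa only [Int.cast_id, mul_one] using h.int_mul_eq m

/-- First integrals of the discrete system arising from NLS Darboux matrices:
`F = f − p q₁₀` is conserved in the `m`-direction and `G = g − p q₀₁` in the
`n`-direction; hence `F = α(n)` and `G = β(m)`. -/
theorem stmt_10 (p q f g : ℤ × ℤ → ℂ)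
    (hne : ∀ n m : ℤ, 1 + p (n, m) * q (n + 1, m + 1) ≠ 0)
    (h1 : ∀ n m : ℤ, p (n, m + 1) =
      (q (n + 1, m) * (p (n, m)) ^ 2 + (g (n + 1, m) - f (n, m)) * p (n, m) + p (n + 1, m))
        / (1 + p (n, m) * q (n + 1, m + 1)))
    (h2 : ∀ n m : ℤ, q (n, m + 1) =
      (p (n + 1, m) * (q (n + 1, m + 1)) ^ 2 + (f (n, m) - g (n + 1, m)) * q (n + 1, m + 1)
          + q (n + 1, m))
        / (1 + p (n, m) * q (n + 1, m + 1)))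
    (h3 : ∀ n m : ℤ, f (n, m + 1) =
      (q (n + 1, m + 1) * (p (n + 1, m) + p (n, m) * g (n + 1, m)) + f (n, m)
          - p (n, m) * q (n + 1, m))
        / (1 + p (n, m) * q (n + 1, m + 1)))
    (h4 : ∀ n m : ℤ, g (n, m) =
      (q (n + 1, m + 1) * (p (n, m) * f (n, m) - p (n + 1, m)) + g (n + 1, m)
          + p (n, m) * q (n + 1, m))
        / (1 + p (n, m) * q (n + 1, m + 1))) :
    (∀ n m : ℤ,
      f (n, m + 1) - p (n, m + 1) * q (n + 1, m + 1) = f (n, m) - p (n, m) * q (n + 1, m)) ∧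
    (∀ n m : ℤ,
      g (n + 1, m) - p (n + 1, m) * q (n + 1, m + 1) = g (n, m) - p (n, m) * q (n, m + 1)) ∧
    ∃ (α β : ℤ → ℂ), ∀ n m : ℤ,
      f (n, m) - p (n, m) * q (n + 1, m) = α n ∧
      g (n, m) - p (n, m) * q (n, m + 1) = β m := by
  have hF : ∀ n m : ℤ,
      f (n, m + 1) - p (n, m + 1) * q (n + 1, m + 1) = f (n, m) - p (n, m) * q (n + 1, m) :=
    fun n m => darboux_first_integral_f (hne n m) (h1 n m) (h3 n m)
  have hG : ∀ n m : ℤ,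
      g (n + 1, m) - p (n + 1, m) * q (n + 1, m + 1) = g (n, m) - p (n, m) * q (n, m + 1) :=
    fun n m => darboux_first_integral_g (hne n m) (h2 n m) (h4 n m)
  refine ⟨hF, hG, fun n => f (n, 0) - p (n, 0) * q (n + 1, 0),
    fun m => g (0, m) - p (0, m) * q (0, m + 1), fun n m => ⟨?_, ?_⟩⟩
  · exact Function.Periodic.eq_apply_zero_of_int (u := fun m => f (n, m) - p (n, m) * q (n + 1, m))
      (hF n) m
  · exact Function.Periodic.eq_apply_zero_of_int (u := fun n => g (n, m) - p (n, m) * q (n, m + 1))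
      (fun n => hG n m) n
end

section
/- (Reduction to the Adler–Yamilov system.) Let p, q : ℤ × ℤ → ℂ, α : ℤ → ℂ, β : ℤ → ℂ, and use the shift notation h_{ij}(n,m) = h(n+i, m+j). Suppose that for all (n,m): 1 + p q₁₁ ≠ 0, p₀₁ = (q₁₀ p² + (g₁₀ − f) p + p₁₀)/(1 + p q₁₁) and q₀₁ = (p₁₀ q₁₁² + (f − g₁₀) q₁₁ + q₁₀)/(1 + p q₁₁), where f(n,m) = α(n) + p q₁₀ and g₁₀(n,m) = β(m) + p₁₀ q₁₁. Then for all (n,m): p₀₁ = p₁₀ − (α(n) − β(m)) p/(1 + p q₁₁) and q₀₁ = q₁₀ + (α(n) − β(m)) q₁₁/(1 + p q₁₁). -/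
/-!
The first integrals make the quadratic terms of the numerators cancel against the denominator
`1 + p q₁₁`: the numerator of `p₀₁` equals `p₁₀ (1 + p q₁₁) - (α - β) p`, and that of `q₀₁`
equals `q₁₀ (1 + p q₁₁) + (α - β) q₁₁`.
-/

section AdlerYamilov

variable {K : Type*} [Field K]

theorem nls_p_update_eq_adlerYamilov (p p₁₀ q₁₀ q₁₁ a b : K) (hD : 1 + p * q₁₁ ≠ 0) :
    (q₁₀ * p ^ 2 + ((b + p₁₀ * q₁₁) - (a + p * q₁₀)) * p + p₁₀) / (1 + p * q₁₁) =
      p₁₀ - (a - b) * p / (1 + p * q₁₁) := by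
  have hnum : q₁₀ * p ^ 2 + ((b + p₁₀ * q₁₁) - (a + p * q₁₀)) * p + p₁₀ =
      p₁₀ * (1 + p * q₁₁) - (a - b) * p := by ring
  rw [hnum, sub_div, mul_div_cancel_right₀ _ hD]

theorem nls_q_update_eq_adlerYamilov (p p₁₀ q₁₀ q₁₁ a b : K) (hD : 1 + p * q₁₁ ≠ 0) :
    (p₁₀ * q₁₁ ^ 2 + ((a + p * q₁₀) - (b + p₁₀ * q₁₁)) * q₁₁ + q₁₀) / (1 + p * q₁₁) =
      q₁₀ + (a - b) * q₁₁ / (1 + p * q₁₁) := by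
  have hnum : p₁₀ * q₁₁ ^ 2 + ((a + p * q₁₀) - (b + p₁₀ * q₁₁)) * q₁₁ + q₁₀ =
      q₁₀ * (1 + p * q₁₁) + (a - b) * q₁₁ := by ring
  rw [hnum, add_div, mul_div_cancel_right₀ _ hD]

end AdlerYamilov

/-- Reduction of the discrete NLS system to the non-autonomous Adler–Yamilov
system, using the first integrals `f = α(n) + p q₁₀` and `g₁₀ = β(m) + p₁₀ q₁₁`. -/
theorem stmt_11 (p q : ℤ × ℤ → ℂ) (α β : ℤ → ℂ)
    (hne : ∀ n m : ℤ, 1 + p (n, m) * q (n + 1, m + 1) ≠ 0)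
    (h1 : ∀ n m : ℤ, p (n, m + 1) =
      (q (n + 1, m) * (p (n, m)) ^ 2
          + ((β m + p (n + 1, m) * q (n + 1, m + 1)) - (α n + p (n, m) * q (n + 1, m)))
            * p (n, m)
          + p (n + 1, m))
        / (1 + p (n, m) * q (n + 1, m + 1)))
    (h2 : ∀ n m : ℤ, q (n, m + 1) =
      (p (n + 1, m) * (q (n + 1, m + 1)) ^ 2
          + ((α n + p (n, m) * q (n + 1, m)) - (β m + p (n + 1, m) * q (n + 1, m + 1)))
            * q (n + 1, m + 1)
          + q (n + 1, m))
        / (1 + p (n, m) * q (n + 1, m + 1))) :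
    ∀ n m : ℤ,
      p (n, m + 1) = p (n + 1, m)
        - (α n - β m) * p (n, m) / (1 + p (n, m) * q (n + 1, m + 1)) ∧
      q (n, m + 1) = q (n + 1, m)
        + (α n - β m) * q (n + 1, m + 1) / (1 + p (n, m) * q (n + 1, m + 1)) := fun n m =>
  ⟨(h1 n m).trans (nls_p_update_eq_adlerYamilov _ _ _ _ _ _ (hne n m)),
    (h2 n m).trans (nls_q_update_eq_adlerYamilov _ _ _ _ _ _ (hne n m))⟩
end

section
/- (Derivation of the discrete Toda equation.) Let q : ℤ × ℤ → ℂ with q(n,m) ≠ 0 for all (n,m), let β : ℤ → ℂ, and use the shift notation q_{ij}(n,m) = q(n+i, m+j). Suppose there is a function f : ℤ × ℤ → ℂ satisfying, for all (n,m), both f = q₀₁/q₁₀ − q₁₀/q₁₁ + β(m) and f₀₁ = q₁₁/q₂₀ − q₁₀/q₁₁ + β(m). Then for all (n,m): q₁₁/q₂₀ − q₀₂/q₁₁ + q₁₁/q₁₂ − q₁₀/q₁₁ = β(m+1) − β(m). Equivalently, if w : ℤ × ℤ → ℂ is such that q(n,m) = exp(−w(n−1,m−1)), then w satisfies the discrete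 Toda type equation e^{w₁,₋₁ − w} − e^{w − w₋₁,₁} + e^{w₀₁ − w} − e^{w − w₀,₋₁} = β(m+1) − β(m). -/
/-!
Evaluating the first expression for `f` at `(n, m + 1)` and comparing it with the second
expression for `f₀₁` at `(n, m)` gives the discrete Toda equation for `q`. Under
`q(n, m) = exp (-w(n - 1, m - 1))` each quotient of two values of `q` becomes the exponential of a
difference of values of `w`.
-/

theorem discreteToda_of_two_forms_of_f (q : ℤ × ℤ → ℂ) (β : ℤ → ℂ) (f : ℤ × ℤ → ℂ)
    (hf : ∀ n m : ℤ, f (n, m) =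
      q (n, m + 1) / q (n + 1, m) - q (n + 1, m) / q (n + 1, m + 1) + β m)
    (hf01 : ∀ n m : ℤ, f (n, m + 1) =
      q (n + 1, m + 1) / q (n + 2, m) - q (n + 1, m) / q (n + 1, m + 1) + β m)
    (n m : ℤ) :
    q (n + 1, m + 1) / q (n + 2, m) - q (n, m + 2) / q (n + 1, m + 1)
      + q (n + 1, m + 1) / q (n + 1, m + 2) - q (n + 1, m) / q (n + 1, m + 1)
      = β (m + 1) - β m := by
  have hf_succ := hf n (m + 1)
  rw [add_assoc m 1 1, one_add_one_eq_two] at hf_succ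
  linear_combination hf_succ - hf01 n m

theorem discreteToda_exp_of_discreteToda (q : ℤ × ℤ → ℂ) (β : ℤ → ℂ) (w : ℤ × ℤ → ℂ)
    (hw : ∀ n m : ℤ, q (n, m) = Complex.exp (-w (n - 1, m - 1)))
    (htoda : ∀ n m : ℤ,
      q (n + 1, m + 1) / q (n + 2, m) - q (n, m + 2) / q (n + 1, m + 1)
        + q (n + 1, m + 1) / q (n + 1, m + 2) - q (n + 1, m) / q (n + 1, m + 1)
        = β (m + 1) - β m)
    (n m : ℤ) :
    Complex.exp (w (n + 1, m - 1) - w (n, m))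
      - Complex.exp (w (n, m) - w (n - 1, m + 1))
      + Complex.exp (w (n, m + 1) - w (n, m))
      - Complex.exp (w (n, m) - w (n, m - 1))
      = β (m + 1) - β m := by
  have h := htoda n m
  simp only [hw, ← Complex.exp_sub, neg_sub_neg, add_sub_cancel_right,
    show n + 2 - 1 = n + 1 by ring, show m + 2 - 1 = m + 1 by ring] at h
  exact h

theorem stmt_12_general (q : ℤ × ℤ → ℂ) (β : ℤ → ℂ)
    (f : ℤ × ℤ → ℂ)
    (hf : ∀ n m : ℤ, f (n, m) =
      q (n, m + 1) / q (n + 1, m) - q (n + 1, m) / q (n + 1, m + 1) + β m)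
    (hf01 : ∀ n m : ℤ, f (n, m + 1) =
      q (n + 1, m + 1) / q (n + 2, m) - q (n + 1, m) / q (n + 1, m + 1) + β m) :
    (∀ n m : ℤ,
      q (n + 1, m + 1) / q (n + 2, m) - q (n, m + 2) / q (n + 1, m + 1)
        + q (n + 1, m + 1) / q (n + 1, m + 2) - q (n + 1, m) / q (n + 1, m + 1)
      = β (m + 1) - β m) ∧
    (∀ w : ℤ × ℤ → ℂ, (∀ n m : ℤ, q (n, m) = Complex.exp (-w (n - 1, m - 1))) →
      ∀ n m : ℤ,
        Complex.exp (w (n + 1, m - 1) - w (n, m))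
          - Complex.exp (w (n, m) - w (n - 1, m + 1))
          + Complex.exp (w (n, m + 1) - w (n, m))
          - Complex.exp (w (n, m) - w (n, m - 1))
        = β (m + 1) - β m) :=
  have htoda := discreteToda_of_two_forms_of_f q β f hf hf01
  ⟨htoda, fun w hw => discreteToda_exp_of_discreteToda q β w hw htoda⟩

/-- Derivation of the discrete Toda type equation from the compatibility of two
Darboux matrices for NLS. -/
theorem stmt_12 (q : ℤ × ℤ → ℂ) (hq : ∀ n m : ℤ, q (n, m) ≠ 0) (β : ℤ → ℂ)
    (f : ℤ × ℤ → ℂ)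
    (hf : ∀ n m : ℤ, f (n, m) =
      q (n, m + 1) / q (n + 1, m) - q (n + 1, m) / q (n + 1, m + 1) + β m)
    (hf01 : ∀ n m : ℤ, f (n, m + 1) =
      q (n + 1, m + 1) / q (n + 2, m) - q (n + 1, m) / q (n + 1, m + 1) + β m) :
    (∀ n m : ℤ,
      q (n + 1, m + 1) / q (n + 2, m) - q (n, m + 2) / q (n + 1, m + 1)
        + q (n + 1, m + 1) / q (n + 1, m + 2) - q (n + 1, m) / q (n + 1, m + 1)
      = β (m + 1) - β m) ∧
    (∀ w : ℤ × ℤ → ℂ, (∀ n m : ℤ, q (n, m) = Complex.exp (-w (n - 1, m - 1))) →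
      ∀ n m : ℤ,
        Complex.exp (w (n + 1, m - 1) - w (n, m))
          - Complex.exp (w (n, m) - w (n - 1, m + 1))
          + Complex.exp (w (n, m + 1) - w (n, m))
          - Complex.exp (w (n, m) - w (n, m - 1))
        = β (m + 1) - β m) :=
  stmt_12_general q β f hf hf01
end

section
/- Let x₁, x₂, X, y₁, y₂, Y ∈ ℂ with 1 + x₁ y₂ ≠ 0, and define u₁ = (y₁ + x₁² x₂ − x₁ X + x₁ Y)/(1 + x₁ y₂), u₂ = y₂, U = (y₁ y₂ − x₁ x₂ + X + x₁ y₂ Y)/(1 + x₁ y₂), v₁ = x₁, v₂ = (x₂ + y₁ y₂² + y₂ X − y₂ Y)/(1 + x₁ y₂), V = (x₁ x₂ − y₁ y₂ + x₁ y₂ X + Y)/(1 + x₁ y₂). Then: (1) U − u₁ u₂ = X − x₁ x₂ and V − v₁ v₂ = Y − y₁ y₂; (2) if moreover X = a + x₁ x₂ and Y = b + y₁ y₂ for some a, b ∈ ℂ, then (u₁, u₂) = (y₁ − (a − b) x₁/(1 + x₁ y₂), y₂) and (v₁, v₂) = (x₁, x₂ + (a − b) y₂/(1 + x₁ y₂)),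 i.e. the map restricts on the level sets of these invariants to the Adler–Yamilov map. -/
/-- The six-dimensional Yang–Baxter map from the NLS Darboux matrix has
invariants `X − x₁x₂` and `Y − y₁y₂`, and on the level sets `X = a + x₁x₂`,
`Y = b + y₁y₂` it restricts to the Adler–Yamilov map. Here
`u₁, u₂, U, v₁, v₂, V` are written out explicitly (`u₂ = y₂`, `v₁ = x₁`). -/
theorem stmt_13 (x₁ x₂ X y₁ y₂ Y : ℂ) (h : 1 + x₁ * y₂ ≠ 0) :
    ((y₁ * y₂ - x₁ * x₂ + X + x₁ * y₂ * Y) / (1 + x₁ * y₂)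
        - ((y₁ + x₁ ^ 2 * x₂ - x₁ * X + x₁ * Y) / (1 + x₁ * y₂)) * y₂
      = X - x₁ * x₂) ∧
    ((x₁ * x₂ - y₁ * y₂ + x₁ * y₂ * X + Y) / (1 + x₁ * y₂)
        - x₁ * ((x₂ + y₁ * y₂ ^ 2 + y₂ * X - y₂ * Y) / (1 + x₁ * y₂))
      = Y - y₁ * y₂) ∧
    (∀ a b : ℂ, X = a + x₁ * x₂ → Y = b + y₁ * y₂ →
      ((y₁ + x₁ ^ 2 * x₂ - x₁ * X + x₁ * Y) / (1 + x₁ * y₂), y₂)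
        = (y₁ - (a - b) * x₁ / (1 + x₁ * y₂), y₂) ∧
      (x₁, (x₂ + y₁ * y₂ ^ 2 + y₂ * X - y₂ * Y) / (1 + x₁ * y₂))
        = (x₁, x₂ + (a - b) * y₂ / (1 + x₁ * y₂))) := by
  have h' : 1 + y₂ * x₁ ≠ 0 := by rwa [mul_comm]
  refine ⟨by field_simp; ring, by field_simp; ring, ?_⟩
  rintro a b rfl rfl
  constructor <;> simp only [Prod.mk.injEq, eq_self_iff_true, true_and, and_true] <;>
    field_simp <;> ring
end

section
/- Let x₁, x₂, X, y₁, y₂, Y ∈ ℂ with 1 + x₁ y₂ ≠ 0, and define u₁ = (y₁ + x₁² x₂ − x₁ X + x₁ Y)/(1 + x₁ y₂), u₂ = y₂, U = (y₁ y₂ − x₁ x₂ + X + x₁ y₂ Y)/(1 + x₁ y₂), v₁ = x₁, v₂ = (x₂ + y₁ y₂² + y₂ X − y₂ Y)/(1 + x₁ y₂), V = (x₁ x₂ − y₁ y₂ + x₁ y₂ X + Y)/(1 + x₁ y₂). Then U + V = X + Y and u₂ v₁ + u₁ v₂ + U V = x₂ y₁ + x₁ y₂ + X Y; i.e. I₁(x,y)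 = X + Y and I₂(x,y) = x₂ y₁ + x₁ y₂ + X Y are invariants of the map. -/
/-- The quantities `I₁ = X + Y` and `I₂ = x₂y₁ + x₁y₂ + XY` are invariants of
the six-dimensional Yang–Baxter map obtained from the NLS Darboux matrix. -/
theorem stmt_14 (x₁ x₂ X y₁ y₂ Y : ℂ) (h : 1 + x₁ * y₂ ≠ 0) :
    ((y₁ * y₂ - x₁ * x₂ + X + x₁ * y₂ * Y) / (1 + x₁ * y₂)
        + (x₁ * x₂ - y₁ * y₂ + x₁ * y₂ * X + Y) / (1 + x₁ * y₂)
      = X + Y) ∧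
    (y₂ * x₁
        + ((y₁ + x₁ ^ 2 * x₂ - x₁ * X + x₁ * Y) / (1 + x₁ * y₂))
          * ((x₂ + y₁ * y₂ ^ 2 + y₂ * X - y₂ * Y) / (1 + x₁ * y₂))
        + ((y₁ * y₂ - x₁ * x₂ + X + x₁ * y₂ * Y) / (1 + x₁ * y₂))
          * ((x₁ * x₂ - y₁ * y₂ + x₁ * y₂ * X + Y) / (1 + x₁ * y₂))
      = x₂ * y₁ + x₁ * y₂ + X * Y) := by
  have h1 : 1 + y₂ * x₁ ≠ 0 := by rwa [mul_comm]
  constructor <;> field_simp <;> ring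
end

section
/- Let a, b ∈ ℂ and define on the set {(x₁, x₂, y₁, y₂) ∈ ℂ⁴ : 1 + x₁ y₂ ≠ 0} the Adler–Yamilov map Y_{a,b}(x₁, x₂, y₁, y₂) = (u₁, u₂, v₁, v₂) with u₁ = y₁ − (a − b) x₁/(1 + x₁ y₂), u₂ = y₂, v₁ = x₁, v₂ = x₂ + (a − b) y₂/(1 + x₁ y₂). Define I₁(x₁,x₂,y₁,y₂) = x₁ x₂ + y₁ y₂ + a + b and I₂(x₁,x₂,y₁,y₂) = (a + x₁ x₂)(b + y₁ y₂) + x₁ y₂ + x₂ y₁ + 1, and for smooth functions F, G of (x₁,x₂,y₁,y₂) define the canonical Poisson bracket {F, G} = ∂F/∂x₁ ∂G/∂x₂ − ∂F/∂x₂ ∂G/∂x₁ + ∂F/∂y₁ ∂G/∂y₂ − ∂F/∂y₂ ∂G/∂y₁. Then: (1) I₁ ∘ Y_{a,b} = I₁ and I₂ ∘ Y_{a,b} = I₂ wherever 1 + x₁ y₂ ≠ 0; (2) {I₁, I₂} = 0 identically; (3) Y_{a,b} is a Poisson map with respect to this bracket, i.e. {u₁, u₂} = 1, {v₁, v₂}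 = 1, and {u_i, v_j} = 0 for i, j ∈ {1,2}, where the brackets of the component functions are computed with the canonical bracket in (x₁,x₂,y₁,y₂). -/
lemma ay_deriv_affine (P Q : ℂ) :
    deriv (fun t : ℂ => P + Q * t) 0 = Q := by
  simpa using (((hasDerivAt_id (0:ℂ)).const_mul Q).const_add P).deriv

lemma ay_deriv_frac (A P Q R S : ℂ) (hR : R ≠ 0) :
    deriv (fun t : ℂ => A + (P + Q * t) / (R + S * t)) 0
      = (Q * R - P * S) / R ^ 2 := by
  have h1 : HasDerivAt (fun t : ℂ => P + Q * t) Q 0 := by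
    simpa using ((hasDerivAt_id (0:ℂ)).const_mul Q).const_add P
  have h2 : HasDerivAt (fun t : ℂ => R + S * t) S 0 := by
    simpa using ((hasDerivAt_id (0:ℂ)).const_mul S).const_add R
  have h3 := (h1.div h2 (by simpa using hR)).const_add A
  rw [show (fun t : ℂ => A + (P + Q * t) / (R + S * t)) = (fun x => A + ((fun t => P + Q * t) / fun t => R + S * t) x) from rfl, h3.deriv]
  simp

/-- Complete (Liouville) integrability of the Adler–Yamilov map: the invariants
`I₁, I₂` are preserved, they are in involution for the canonical Poisson
bracket `{x₁,x₂} = {y₁,y₂} = 1`, and the map is Poisson.  Points of `ℂ⁴` are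
written `z = (x₁, x₂, y₁, y₂)` and partial derivatives are expressed as
derivatives along the coordinate directions. -/
theorem stmt_15 (a b : ℂ)
    (u₁ u₂ v₁ v₂ I₁ I₂ : ℂ × ℂ × ℂ × ℂ → ℂ)
    (hu₁ : ∀ z : ℂ × ℂ × ℂ × ℂ,
      u₁ z = z.2.2.1 - (a - b) * z.1 / (1 + z.1 * z.2.2.2))
    (hu₂ : ∀ z : ℂ × ℂ × ℂ × ℂ, u₂ z = z.2.2.2)
    (hv₁ : ∀ z : ℂ × ℂ × ℂ × ℂ, v₁ z = z.1)
    (hv₂ : ∀ z : ℂ × ℂ × ℂ × ℂ,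
      v₂ z = z.2.1 + (a - b) * z.2.2.2 / (1 + z.1 * z.2.2.2))
    (hI₁ : ∀ z : ℂ × ℂ × ℂ × ℂ,
      I₁ z = z.1 * z.2.1 + z.2.2.1 * z.2.2.2 + a + b)
    (hI₂ : ∀ z : ℂ × ℂ × ℂ × ℂ,
      I₂ z = (a + z.1 * z.2.1) * (b + z.2.2.1 * z.2.2.2)
        + z.1 * z.2.2.2 + z.2.1 * z.2.2.1 + 1)
    (pb : (ℂ × ℂ × ℂ × ℂ → ℂ) → (ℂ × ℂ × ℂ × ℂ → ℂ) → (ℂ × ℂ × ℂ × ℂ → ℂ))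
    (hpb : ∀ (F G : ℂ × ℂ × ℂ × ℂ → ℂ) (z : ℂ × ℂ × ℂ × ℂ), pb F G z =
      deriv (fun t => F (z.1 + t, z.2.1, z.2.2.1, z.2.2.2)) 0 *
        deriv (fun t => G (z.1, z.2.1 + t, z.2.2.1, z.2.2.2)) 0
      - deriv (fun t => F (z.1, z.2.1 + t, z.2.2.1, z.2.2.2)) 0 *
        deriv (fun t => G (z.1 + t, z.2.1, z.2.2.1, z.2.2.2)) 0
      + deriv (fun t => F (z.1, z.2.1, z.2.2.1 + t, z.2.2.2)) 0 *
        deriv (fun t => G (z.1, z.2.1, z.2.2.1, z.2.2.2 + t)) 0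
      - deriv (fun t => F (z.1, z.2.1, z.2.2.1, z.2.2.2 + t)) 0 *
        deriv (fun t => G (z.1, z.2.1, z.2.2.1 + t, z.2.2.2)) 0) :
    (∀ z : ℂ × ℂ × ℂ × ℂ, 1 + z.1 * z.2.2.2 ≠ 0 →
      I₁ (u₁ z, u₂ z, v₁ z, v₂ z) = I₁ z ∧ I₂ (u₁ z, u₂ z, v₁ z, v₂ z) = I₂ z) ∧
    (∀ z : ℂ × ℂ × ℂ × ℂ, pb I₁ I₂ z = 0) ∧
    (∀ z : ℂ × ℂ × ℂ × ℂ, 1 + z.1 * z.2.2.2 ≠ 0 →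
      pb u₁ u₂ z = 1 ∧ pb v₁ v₂ z = 1 ∧
      pb u₁ v₁ z = 0 ∧ pb u₁ v₂ z = 0 ∧ pb u₂ v₁ z = 0 ∧ pb u₂ v₂ z = 0) := by
  refine ⟨?_, ?_, ?_⟩
  · -- invariance
    rintro ⟨x₁, x₂, y₁, y₂⟩ hz
    simp only at hz
    constructor
    · simp only [hI₁, hu₁, hu₂, hv₁, hv₂]
      field_simp
      ring
    · simp only [hI₂, hu₁, hu₂, hv₁, hv₂]
      field_simp
      ring
  · -- involution
    rintro ⟨x₁, x₂, y₁, y₂⟩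
    rw [hpb]
    simp only
    have d1 : deriv (fun t => I₁ (x₁ + t, x₂, y₁, y₂)) 0 = x₂ := by
      have e : (fun t => I₁ (x₁ + t, x₂, y₁, y₂))
          = fun t : ℂ => (x₁ * x₂ + y₁ * y₂ + a + b) + x₂ * t := by
        funext t; simp only [hI₁]; ring
      rw [e, ay_deriv_affine]
    have d2 : deriv (fun t => I₁ (x₁, x₂ + t, y₁, y₂)) 0 = x₁ := by
      have e : (fun t => I₁ (x₁, x₂ + t, y₁, y₂))
          = fun t : ℂ => (x₁ * x₂ + y₁ * y₂ + a + b) + x₁ * t := by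
        funext t; simp only [hI₁]; ring
      rw [e, ay_deriv_affine]
    have d3 : deriv (fun t => I₁ (x₁, x₂, y₁ + t, y₂)) 0 = y₂ := by
      have e : (fun t => I₁ (x₁, x₂, y₁ + t, y₂))
          = fun t : ℂ => (x₁ * x₂ + y₁ * y₂ + a + b) + y₂ * t := by
        funext t; simp only [hI₁]; ring
      rw [e, ay_deriv_affine]
    have d4 : deriv (fun t => I₁ (x₁, x₂, y₁, y₂ + t)) 0 = y₁ := by
      have e : (fun t => I₁ (x₁, x₂, y₁, y₂ + t))
          = fun t : ℂ => (x₁ * x₂ + y₁ * y₂ + a + b) + y₁ * t := by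
        funext t; simp only [hI₁]; ring
      rw [e, ay_deriv_affine]
    have e1 : deriv (fun t => I₂ (x₁ + t, x₂, y₁, y₂)) 0
        = x₂ * (b + y₁ * y₂) + y₂ := by
      have e : (fun t => I₂ (x₁ + t, x₂, y₁, y₂))
          = fun t : ℂ => ((a + x₁ * x₂) * (b + y₁ * y₂) + x₁ * y₂ + x₂ * y₁ + 1)
            + (x₂ * (b + y₁ * y₂) + y₂) * t := by
        funext t; simp only [hI₂]; ring
      rw [e, ay_deriv_affine]
    have e2 : deriv (fun t => I₂ (x₁, x₂ + t, y₁, y₂)) 0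
        = x₁ * (b + y₁ * y₂) + y₁ := by
      have e : (fun t => I₂ (x₁, x₂ + t, y₁, y₂))
          = fun t : ℂ => ((a + x₁ * x₂) * (b + y₁ * y₂) + x₁ * y₂ + x₂ * y₁ + 1)
            + (x₁ * (b + y₁ * y₂) + y₁) * t := by
        funext t; simp only [hI₂]; ring
      rw [e, ay_deriv_affine]
    have e3 : deriv (fun t => I₂ (x₁, x₂, y₁ + t, y₂)) 0
        = (a + x₁ * x₂) * y₂ + x₂ := by
      have e : (fun t => I₂ (x₁, x₂, y₁ + t, y₂))
          = fun t : ℂ => ((a + x₁ * x₂) * (b + y₁ * y₂) + x₁ * y₂ + x₂ * y₁ + 1)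
            + ((a + x₁ * x₂) * y₂ + x₂) * t := by
        funext t; simp only [hI₂]; ring
      rw [e, ay_deriv_affine]
    have e4 : deriv (fun t => I₂ (x₁, x₂, y₁, y₂ + t)) 0
        = (a + x₁ * x₂) * y₁ + x₁ := by
      have e : (fun t => I₂ (x₁, x₂, y₁, y₂ + t))
          = fun t : ℂ => ((a + x₁ * x₂) * (b + y₁ * y₂) + x₁ * y₂ + x₂ * y₁ + 1)
            + ((a + x₁ * x₂) * y₁ + x₁) * t := by
        funext t; simp only [hI₂]; ring
      rw [e, ay_deriv_affine]
    rw [d1, d2, d3, d4, e1, e2, e3, e4]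
    ring
  · -- Poisson property
    rintro ⟨x₁, x₂, y₁, y₂⟩ hz
    simp only at hz ⊢
    set c : ℂ := a - b with hc
    set D : ℂ := 1 + x₁ * y₂ with hD
    -- derivatives of u₁
    have du₁x₁ : deriv (fun t => u₁ (x₁ + t, x₂, y₁, y₂)) 0 = -c / D ^ 2 := by
      have e : (fun t => u₁ (x₁ + t, x₂, y₁, y₂))
          = fun t : ℂ => y₁ + ((-(c * x₁)) + (-c) * t) / (D + y₂ * t) := by
        funext t; simp only [hu₁, hc, hD]; ring
      rw [e, ay_deriv_frac _ _ _ _ _ hz]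
      rw [hD]; ring
    have du₁x₂ : deriv (fun t => u₁ (x₁, x₂ + t, y₁, y₂)) 0 = 0 := by
      have e : (fun t => u₁ (x₁, x₂ + t, y₁, y₂))
          = fun t : ℂ => (y₁ - c * x₁ / D) + 0 * t := by
        funext t; simp only [hu₁, hc, hD]; ring
      rw [e, ay_deriv_affine]
    have du₁y₁ : deriv (fun t => u₁ (x₁, x₂, y₁ + t, y₂)) 0 = 1 := by
      have e : (fun t => u₁ (x₁, x₂, y₁ + t, y₂))
          = fun t : ℂ => (y₁ - c * x₁ / D) + 1 * t := by
        funext t; simp only [hu₁, hc, hD]; ring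
      rw [e, ay_deriv_affine]
    have du₁y₂ : deriv (fun t => u₁ (x₁, x₂, y₁, y₂ + t)) 0
        = c * x₁ ^ 2 / D ^ 2 := by
      have e : (fun t => u₁ (x₁, x₂, y₁, y₂ + t))
          = fun t : ℂ => y₁ + ((-(c * x₁)) + 0 * t) / (D + x₁ * t) := by
        funext t; simp only [hu₁, hc, hD]; ring
      rw [e, ay_deriv_frac _ _ _ _ _ hz]
      ring
    -- derivatives of u₂
    have du₂x₁ : deriv (fun t => u₂ (x₁ + t, x₂, y₁, y₂)) 0 = 0 := by
      have e : (fun t => u₂ (x₁ + t, x₂, y₁, y₂)) = fun t : ℂ => y₂ + 0 * t := by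
        funext t; simp only [hu₂]; ring
      rw [e, ay_deriv_affine]
    have du₂x₂ : deriv (fun t => u₂ (x₁, x₂ + t, y₁, y₂)) 0 = 0 := by
      have e : (fun t => u₂ (x₁, x₂ + t, y₁, y₂)) = fun t : ℂ => y₂ + 0 * t := by
        funext t; simp only [hu₂]; ring
      rw [e, ay_deriv_affine]
    have du₂y₁ : deriv (fun t => u₂ (x₁, x₂, y₁ + t, y₂)) 0 = 0 := by
      have e : (fun t => u₂ (x₁, x₂, y₁ + t, y₂)) = fun t : ℂ => y₂ + 0 * t := by
        funext t; simp only [hu₂]; ring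
      rw [e, ay_deriv_affine]
    have du₂y₂ : deriv (fun t => u₂ (x₁, x₂, y₁, y₂ + t)) 0 = 1 := by
      have e : (fun t => u₂ (x₁, x₂, y₁, y₂ + t)) = fun t : ℂ => y₂ + 1 * t := by
        funext t; simp only [hu₂]; ring
      rw [e, ay_deriv_affine]
    -- derivatives of v₁
    have dv₁x₁ : deriv (fun t => v₁ (x₁ + t, x₂, y₁, y₂)) 0 = 1 := by
      have e : (fun t => v₁ (x₁ + t, x₂, y₁, y₂)) = fun t : ℂ => x₁ + 1 * t := by
        funext t; simp only [hv₁]; ring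
      rw [e, ay_deriv_affine]
    have dv₁x₂ : deriv (fun t => v₁ (x₁, x₂ + t, y₁, y₂)) 0 = 0 := by
      have e : (fun t => v₁ (x₁, x₂ + t, y₁, y₂)) = fun t : ℂ => x₁ + 0 * t := by
        funext t; simp only [hv₁]; ring
      rw [e, ay_deriv_affine]
    have dv₁y₁ : deriv (fun t => v₁ (x₁, x₂, y₁ + t, y₂)) 0 = 0 := by
      have e : (fun t => v₁ (x₁, x₂, y₁ + t, y₂)) = fun t : ℂ => x₁ + 0 * t := by
        funext t; simp only [hv₁]; ring
      rw [e, ay_deriv_affine]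
    have dv₁y₂ : deriv (fun t => v₁ (x₁, x₂, y₁, y₂ + t)) 0 = 0 := by
      have e : (fun t => v₁ (x₁, x₂, y₁, y₂ + t)) = fun t : ℂ => x₁ + 0 * t := by
        funext t; simp only [hv₁]; ring
      rw [e, ay_deriv_affine]
    -- derivatives of v₂
    have dv₂x₁ : deriv (fun t => v₂ (x₁ + t, x₂, y₁, y₂)) 0
        = -(c * y₂ ^ 2) / D ^ 2 := by
      have e : (fun t => v₂ (x₁ + t, x₂, y₁, y₂))
          = fun t : ℂ => x₂ + ((c * y₂) + 0 * t) / (D + y₂ * t) := by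
        funext t; simp only [hv₂, hc, hD]; ring
      rw [e, ay_deriv_frac _ _ _ _ _ hz]
      ring
    have dv₂x₂ : deriv (fun t => v₂ (x₁, x₂ + t, y₁, y₂)) 0 = 1 := by
      have e : (fun t => v₂ (x₁, x₂ + t, y₁, y₂))
          = fun t : ℂ => (x₂ + c * y₂ / D) + 1 * t := by
        funext t; simp only [hv₂, hc, hD]; ring
      rw [e, ay_deriv_affine]
    have dv₂y₁ : deriv (fun t => v₂ (x₁, x₂, y₁ + t, y₂)) 0 = 0 := by
      have e : (fun t => v₂ (x₁, x₂, y₁ + t, y₂))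
          = fun t : ℂ => (x₂ + c * y₂ / D) + 0 * t := by
        funext t; simp only [hv₂, hc, hD]; ring
      rw [e, ay_deriv_affine]
    have dv₂y₂ : deriv (fun t => v₂ (x₁, x₂, y₁, y₂ + t)) 0 = c / D ^ 2 := by
      have e : (fun t => v₂ (x₁, x₂, y₁, y₂ + t))
          = fun t : ℂ => x₂ + ((c * y₂) + c * t) / (D + x₁ * t) := by
        funext t; simp only [hv₂, hc, hD]; ring
      rw [e, ay_deriv_frac _ _ _ _ _ hz]
      rw [hD]; ring
    refine ⟨?_, ?_, ?_, ?_, ?_, ?_⟩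
    · rw [hpb]; simp only
      rw [du₁x₁, du₁x₂, du₁y₁, du₁y₂, du₂x₁, du₂x₂, du₂y₁, du₂y₂]; ring
    · rw [hpb]; simp only
      rw [dv₁x₁, dv₁x₂, dv₁y₁, dv₁y₂, dv₂x₁, dv₂x₂, dv₂y₁, dv₂y₂]; ring
    · rw [hpb]; simp only
      rw [du₁x₁, du₁x₂, du₁y₁, du₁y₂, dv₁x₁, dv₁x₂, dv₁y₁, dv₁y₂]; ring
    · rw [hpb]; simp only
      rw [du₁x₁, du₁x₂, du₁y₁, du₁y₂, dv₂x₁, dv₂x₂, dv₂y₁, dv₂y₂]; ring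
    · rw [hpb]; simp only
      rw [du₂x₁, du₂x₂, du₂y₁, du₂y₂, dv₁x₁, dv₁x₂, dv₁y₁, dv₁y₂]; ring
    · rw [hpb]; simp only
      rw [du₂x₁, du₂x₂, du₂y₁, du₂y₂, dv₂x₁, dv₂x₂, dv₂y₁, dv₂y₂]; ring
end

section
/- (3D-consistency of the discrete potential KdV equation.) Let u, u₁₀₀, u₀₁₀, u₀₀₁ ∈ ℂ and a, b, c ∈ ℂ, and define u₁₁₀ = u + (a − b)/(u₀₁₀ − u₁₀₀), u₁₀₁ = u + (a − c)/(u₀₀₁ − u₁₀₀), u₀₁₁ = u + (b − c)/(u₀₀₁ − u₀₁₀), assuming u₀₁₀ ≠ u₁₀₀, u₀₀₁ ≠ u₁₀₀, u₀₀₁ ≠ u₀₁₀. Assume further that u₀₁₁ ≠ u₁₀₁, u₀₁₁ ≠ u₁₁₀, u₁₀₁ ≠ u₁₁₀, and that (a − b) u₀₀₁ + (b − c) u₁₀₀ + (c − a) u₀₁₀ ≠ 0. Then the three values u₀₀₁ + (a − b)/(u₀₁₁ − u₁₀₁), u₀₁₀ + (a − c)/(u₀₁₁ − u₁₁₀), and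 u₁₀₀ + (b − c)/(u₁₀₁ − u₁₁₀) are all equal, and their common value is u₁₁₁ = −[(a − b) u₁₀₀ u₀₁₀ + (b − c) u₀₁₀ u₀₀₁ + (c − a) u₁₀₀ u₀₀₁] / [(a − b) u₀₀₁ + (b − c) u₁₀₀ + (c − a) u₀₁₀]. -/
/-!
Each difference of two values on the second layer of the cube is `-D` divided by two edge
differences of the first layer, where `D = (a - b) u₀₀₁ + (b - c) u₁₀₀ + (c - a) u₀₁₀`. Hence
computing `u₁₁₁` on one face gives a rational expression in `u₁₀₀, u₀₁₀, u₀₀₁` alone, and that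
expression is invariant under permuting the three lattice directions together with their
parameters, so the other two faces give the same value.
-/

section DiscretePotentialKdV

variable {K : Type*} [Field K]

/-- The vertex opposite to `u` on a quadrilateral of the discrete potential KdV equation, where
`u₁, u₂` are the neighbours of `u` along the edges with parameters `a₁, a₂`. -/
def dpkdvCorner (u u₁ u₂ a₁ a₂ : K) : K := u + (a₁ - a₂) / (u₂ - u₁)

lemma dpkdvCorner_comm (u u₁ u₂ a₁ a₂ : K) :
    dpkdvCorner u u₁ u₂ a₁ a₂ = dpkdvCorner u u₂ u₁ a₂ a₁ := by
  rw [dpkdvCorner, dpkdvCorner, ← neg_sub a₁ a₂, ← neg_sub u₂ u₁, neg_div_neg_eq]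

def dpkdvDenom (x y z a b c : K) : K := (a - b) * z + (b - c) * x + (c - a) * y

lemma dpkdvDenom_swap (x y z a b c : K) : dpkdvDenom x z y a c b = -dpkdvDenom x y z a b c := by
  unfold dpkdvDenom; ring

lemma dpkdvDenom_cycle (x y z a b c : K) : dpkdvDenom y z x b c a = dpkdvDenom x y z a b c := by
  unfold dpkdvDenom; ring

/-- The value at the far corner of the cube over the vertices `x, y, z` adjacent to the origin. -/
def dpkdvCubeCorner (x y z a b c : K) : K :=
  -((a - b) * x * y + (b - c) * y * z + (c - a) * x * z) / dpkdvDenom x y z a b c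

lemma dpkdvCubeCorner_swap (x y z a b c : K) :
    dpkdvCubeCorner x z y a c b = dpkdvCubeCorner x y z a b c := by
  rw [dpkdvCubeCorner, dpkdvCubeCorner, dpkdvDenom_swap, ← neg_div_neg_eq]
  ring

lemma dpkdvCubeCorner_cycle (x y z a b c : K) :
    dpkdvCubeCorner y z x b c a = dpkdvCubeCorner x y z a b c := by
  rw [dpkdvCubeCorner, dpkdvCubeCorner, dpkdvDenom_cycle]
  ring

lemma dpkdvCorner_sub_dpkdvCorner {x y z : K} (u a b c : K) (hxz : z ≠ x) (hyz : z ≠ y) :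
    dpkdvCorner u y z b c - dpkdvCorner u x z a c
      = -dpkdvDenom x y z a b c / ((z - x) * (z - y)) := by
  have hx : z - x ≠ 0 := sub_ne_zero.2 hxz
  have hy : z - y ≠ 0 := sub_ne_zero.2 hyz
  unfold dpkdvCorner dpkdvDenom
  field_simp
  ring

lemma dpkdvCorner_dpkdvCorner {x y z : K} (u a b c : K) (hxz : z ≠ x) (hyz : z ≠ y)
    (hD : dpkdvDenom x y z a b c ≠ 0) :
    dpkdvCorner z (dpkdvCorner u x z a c) (dpkdvCorner u y z b c) a b
      = dpkdvCubeCorner x y z a b c := by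
  have hx : z - x ≠ 0 := sub_ne_zero.2 hxz
  have hy : z - y ≠ 0 := sub_ne_zero.2 hyz
  have hnum : -((a - b) * x * y + (b - c) * y * z + (c - a) * x * z)
      = z * dpkdvDenom x y z a b c - (a - b) * ((z - x) * (z - y)) := by
    unfold dpkdvDenom; ring
  rw [dpkdvCorner, dpkdvCorner_sub_dpkdvCorner u a b c hxz hyz, dpkdvCubeCorner, hnum]
  field_simp
  ring

end DiscretePotentialKdV

theorem stmt_16_general (u u₁₀₀ u₀₁₀ u₀₀₁ a b c : ℂ)
    (h1 : u₀₁₀ ≠ u₁₀₀) (h2 : u₀₀₁ ≠ u₁₀₀) (h3 : u₀₀₁ ≠ u₀₁₀)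
    (h7 : (a - b) * u₀₀₁ + (b - c) * u₁₀₀ + (c - a) * u₀₁₀ ≠ 0) :
    u₀₀₁ + (a - b) /
        ((u + (b - c) / (u₀₀₁ - u₀₁₀)) - (u + (a - c) / (u₀₀₁ - u₁₀₀)))
      = -((a - b) * u₁₀₀ * u₀₁₀ + (b - c) * u₀₁₀ * u₀₀₁ + (c - a) * u₁₀₀ * u₀₀₁) /
          ((a - b) * u₀₀₁ + (b - c) * u₁₀₀ + (c - a) * u₀₁₀) ∧
    u₀₁₀ + (a - c) /
        ((u + (b - c) / (u₀₀₁ - u₀₁₀)) - (u + (a - b) / (u₀₁₀ - u₁₀₀)))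
      = -((a - b) * u₁₀₀ * u₀₁₀ + (b - c) * u₀₁₀ * u₀₀₁ + (c - a) * u₁₀₀ * u₀₀₁) /
          ((a - b) * u₀₀₁ + (b - c) * u₁₀₀ + (c - a) * u₀₁₀) ∧
    u₁₀₀ + (b - c) /
        ((u + (a - c) / (u₀₀₁ - u₁₀₀)) - (u + (a - b) / (u₀₁₀ - u₁₀₀)))
      = -((a - b) * u₁₀₀ * u₀₁₀ + (b - c) * u₀₁₀ * u₀₀₁ + (c - a) * u₁₀₀ * u₀₀₁) /
          ((a - b) * u₀₀₁ + (b - c) * u₁₀₀ + (c - a) * u₀₁₀) := by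
  have hD : dpkdvDenom u₁₀₀ u₀₁₀ u₀₀₁ a b c ≠ 0 := h7
  have hD' : dpkdvDenom u₁₀₀ u₀₀₁ u₀₁₀ a c b ≠ 0 := by
    rw [dpkdvDenom_swap]; exact neg_ne_zero.2 hD
  have hD'' : dpkdvDenom u₀₁₀ u₀₀₁ u₁₀₀ b c a ≠ 0 := by
    rwa [dpkdvDenom_cycle]
  refine ⟨dpkdvCorner_dpkdvCorner u a b c h2 h3 hD, ?_, ?_⟩
  · have h := dpkdvCorner_dpkdvCorner u a c b h1 h3.symm hD'
    rwa [dpkdvCorner_comm u u₀₀₁, dpkdvCubeCorner_swap] at h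
  · have h := dpkdvCorner_dpkdvCorner u b c a h1.symm h2.symm hD''
    rwa [dpkdvCorner_comm u u₀₁₀, dpkdvCorner_comm u u₀₀₁, dpkdvCubeCorner_cycle] at h

/-- 3D-consistency of the discrete potential KdV equation: with
`u₁₁₀ = u + (a−b)/(u₀₁₀−u₁₀₀)`, `u₁₀₁ = u + (a−c)/(u₀₀₁−u₁₀₀)`,
`u₀₁₁ = u + (b−c)/(u₀₀₁−u₀₁₀)`, the three ways of computing `u₁₁₁` agree and
give the symmetric rational expression. -/
theorem stmt_16 (u u₁₀₀ u₀₁₀ u₀₀₁ a b c : ℂ)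
    (h1 : u₀₁₀ ≠ u₁₀₀) (h2 : u₀₀₁ ≠ u₁₀₀) (h3 : u₀₀₁ ≠ u₀₁₀)
    (h4 : u + (b - c) / (u₀₀₁ - u₀₁₀) ≠ u + (a - c) / (u₀₀₁ - u₁₀₀))
    (h5 : u + (b - c) / (u₀₀₁ - u₀₁₀) ≠ u + (a - b) / (u₀₁₀ - u₁₀₀))
    (h6 : u + (a - c) / (u₀₀₁ - u₁₀₀) ≠ u + (a - b) / (u₀₁₀ - u₁₀₀))
    (h7 : (a - b) * u₀₀₁ + (b - c) * u₁₀₀ + (c - a) * u₀₁₀ ≠ 0) :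
    u₀₀₁ + (a - b) /
        ((u + (b - c) / (u₀₀₁ - u₀₁₀)) - (u + (a - c) / (u₀₀₁ - u₁₀₀)))
      = -((a - b) * u₁₀₀ * u₀₁₀ + (b - c) * u₀₁₀ * u₀₀₁ + (c - a) * u₁₀₀ * u₀₀₁) /
          ((a - b) * u₀₀₁ + (b - c) * u₁₀₀ + (c - a) * u₀₁₀) ∧
    u₀₁₀ + (a - c) /
        ((u + (b - c) / (u₀₀₁ - u₀₁₀)) - (u + (a - b) / (u₀₁₀ - u₁₀₀)))
      = -((a - b) * u₁₀₀ * u₀₁₀ + (b - c) * u₀₁₀ * u₀₀₁ + (c - a) * u₁₀₀ * u₀₀₁) /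
          ((a - b) * u₀₀₁ + (b - c) * u₁₀₀ + (c - a) * u₀₁₀) ∧
    u₁₀₀ + (b - c) /
        ((u + (a - c) / (u₀₀₁ - u₁₀₀)) - (u + (a - b) / (u₀₁₀ - u₁₀₀)))
      = -((a - b) * u₁₀₀ * u₀₁₀ + (b - c) * u₀₁₀ * u₀₀₁ + (c - a) * u₁₀₀ * u₀₀₁) /
          ((a - b) * u₀₀₁ + (b - c) * u₁₀₀ + (c - a) * u₀₁₀) :=
  stmt_16_general u u₁₀₀ u₀₁₀ u₀₀₁ a b c h1 h2 h3 h7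
end

section
/- (Adler's map satisfies the Yang–Baxter equation.) For parameters a, b ∈ ℂ define the Adler map Y_{a,b}(x, y) = (y − (a − b)/(x + y), x + (a − b)/(x + y)) and define Y^{12}_{a,b}, Y^{13}_{a,c}, Y^{23}_{b,c} acting on triples (x, y, z) ∈ ℂ³ by applying Y to the indicated pair of coordinates and leaving the third coordinate fixed. Then for all a, b, c ∈ ℂ and all (x, y, z) ∈ ℂ³ for which each pairwise sum appearing as a denominator at every intermediate stage of both compositions is nonzero, one has Y^{12}_{a,b} ∘ Y^{13}_{a,c} ∘ Y^{23}_{b,c} (x, y, z) = Y^{23}_{b,c} ∘ Y^{13}_{a,c} ∘ Y^{12}_{a,b} (x, y, z). -/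
theorem adler_aux (a b c x y z : ℂ) (h1 : y + z ≠ 0) (h4 : x + y ≠ 0) (h2 : x + (y + (b - c) / (y + z)) ≠ 0)
  (h3 : y + (b - c) / (y + z) - (a - c) / (x + (y + (b - c) / (y + z))) + (z - (b - c) / (y + z)) ≠ 0)
  (h5 : y - (a - b) / (x + y) + z ≠ 0)
  (h6 : x + (a - b) / (x + y) + (y - (a - b) / (x + y) + (a - c) / (y - (a - b) / (x + y) + z)) ≠ 0) :
  (z - (b - c) / (y + z) -
        (a - b) / (y + (b - c) / (y + z) - (a - c) / (x + (y + (b - c) / (y + z))) + (z - (b - c) / (y + z))),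
      y + (b - c) / (y + z) - (a - c) / (x + (y + (b - c) / (y + z))) +
        (a - b) / (y + (b - c) / (y + z) - (a - c) / (x + (y + (b - c) / (y + z))) + (z - (b - c) / (y + z))),
      x + (a - c) / (x + (y + (b - c) / (y + z)))) =
    (z - (a - c) / (y - (a - b) / (x + y) + z),
      y - (a - b) / (x + y) + (a - c) / (y - (a - b) / (x + y) + z) -
        (b - c) / (x + (a - b) / (x + y) + (y - (a - b) / (x + y) + (a - c) / (y - (a - b) / (x + y) + z))),
      x + (a - b) / (x + y) +
        (b - c) / (x + (a - b) / (x + y) + (y - (a - b) / (x + y) + (a - c) / (y - (a - b) / (x + y) + z)))) := by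
  have E2 : x + (y + (b - c) / (y + z)) = ((x+y)*(y+z)+(b-c))/(y+z) := by
    field_simp; ring
  have E5 : y - (a - b) / (x + y) + z = ((x+y)*(y+z)+(b-a))/(x+y) := by
    field_simp; ring
  have kA : (x+y)*(y+z)+(b-c) ≠ 0 := by
    rw [E2] at h2; exact fun h => h2 (by rw [h]; simp)
  have kB : (x+y)*(y+z)+(b-a) ≠ 0 := by
    rw [E5] at h5; exact fun h => h5 (by rw [h]; simp)
  rw [E2, E5]
  simp only [div_div_eq_mul_div]
  have E3 : y + (b - c) / (y + z) - (a - c) * (y + z) / ((x+y)*(y+z)+(b-c)) + (z - (b - c) / (y + z))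
      = (y+z)*((x+y)*(y+z)+(b-a))/((x+y)*(y+z)+(b-c)) := by
    generalize hA : (x+y)*(y+z)+(b-c) = A at *
    generalize hB : (x+y)*(y+z)+(b-a) = B at *
    field_simp
    subst hA hB
    ring
  have E6 : x + (a - b) / (x + y) + (y - (a - b) / (x + y) + (a - c) * (x + y) / ((x+y)*(y+z)+(b-a)))
      = (x+y)*((x+y)*(y+z)+(b-c))/((x+y)*(y+z)+(b-a)) := by
    generalize hA : (x+y)*(y+z)+(b-c) = A at *
    generalize hB : (x+y)*(y+z)+(b-a) = B at *
    field_simp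
    subst hA hB
    ring
  rw [E3, E6]
  simp only [div_div_eq_mul_div]
  refine Prod.ext ?_ (Prod.ext ?_ ?_) <;> generalize hA : (x+y)*(y+z)+(b-c) = A at * <;> generalize hB : (x+y)*(y+z)+(b-a) = B at * <;> field_simp <;> subst hA hB <;> ring

set_option maxHeartbeats 1000000 in
/-- Adler's map `Y_{a,b}(x,y) = (y − (a−b)/(x+y), x + (a−b)/(x+y))` satisfies
the parametric Yang–Baxter equation, at every point where all the denominators
appearing at the intermediate stages of the two compositions are nonzero. -/
theorem stmt_17 (a b c x y z : ℂ)
    (Y : ℂ → ℂ → ℂ × ℂ → ℂ × ℂ)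
    (hY : ∀ (p q : ℂ) (w : ℂ × ℂ),
      Y p q w = (w.2 - (p - q) / (w.1 + w.2), w.1 + (p - q) / (w.1 + w.2)))
    (Y12 Y13 Y23 : ℂ → ℂ → ℂ × ℂ × ℂ → ℂ × ℂ × ℂ)
    (hY12 : ∀ (p q : ℂ) (w : ℂ × ℂ × ℂ),
      Y12 p q w = ((Y p q (w.1, w.2.1)).1, (Y p q (w.1, w.2.1)).2, w.2.2))
    (hY13 : ∀ (p q : ℂ) (w : ℂ × ℂ × ℂ),
      Y13 p q w = ((Y p q (w.1, w.2.2)).1, w.2.1, (Y p q (w.1, w.2.2)).2))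
    (hY23 : ∀ (p q : ℂ) (w : ℂ × ℂ × ℂ),
      Y23 p q w = (w.1, (Y p q (w.2.1, w.2.2)).1, (Y p q (w.2.1, w.2.2)).2))
    (h1 : y + z ≠ 0)
    (h2 : (Y23 b c (x, y, z)).1 + (Y23 b c (x, y, z)).2.2 ≠ 0)
    (h3 : (Y13 a c (Y23 b c (x, y, z))).1 + (Y13 a c (Y23 b c (x, y, z))).2.1 ≠ 0)
    (h4 : x + y ≠ 0)
    (h5 : (Y12 a b (x, y, z)).1 + (Y12 a b (x, y, z)).2.2 ≠ 0)
    (h6 : (Y13 a c (Y12 a b (x, y, z))).2.1 + (Y13 a c (Y12 a b (x, y, z))).2.2 ≠ 0) :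
    Y12 a b (Y13 a c (Y23 b c (x, y, z))) = Y23 b c (Y13 a c (Y12 a b (x, y, z))) := by
  simp only [hY12, hY13, hY23, hY] at h2 h3 h5 h6 ⊢
  exact adler_aux a b c x y z h1 h4 h2 h3 h5 h6
end
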